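/- arXiv:math/0212079 — 5 statements merged into one kernel-verified Lean document; each statement's English description precedes it below -/
import Mathlib

section
/- Let f, g : (0,1) → (0,1) be functions such that f is a strictly monotone increasing bijection (hence continuous), and suppose f(x/(x+(1-x)y)) = f(x)/(f(x)+(1-f(x))·g(y)) for all x, y ∈ (0,1). Then there exist positive real numbers a, b, c such that f(x) = x^c/(x^c + a(1-x)^c) and g(y) = b·y^c for all x, y ∈ (0,1). -/
/-!
In the odds coordinate `u = (1 - x) / x` the map `x ↦ x / (x + (1 - x) y)` is `u ↦ u y`, so the
conjugate `Φ` of `f` by the odds map satisfies `Φ (u y) = Φ u · g y`. Taking `u = 1` identifies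
`g` with `Φ / Φ 1`, which is therefore multiplicative and strictly increasing on `(0, ∞)`; after
`log ∘ _ ∘ exp` it is a monotone additive map `ℝ → ℝ`, hence linear, so `Φ u = Φ 1 · u ^ c` and
`g y = y ^ c`. Reading `Φ` back through the odds map gives the formula for `f`.
-/

open Set Filter Topology

theorem AddMonoidHom.apply_eq_mul_of_monotone (L : ℝ →+ ℝ) (hL : Monotone L) (t : ℝ) :
    L t = L 1 * t := by
  have hrat : ∀ q : ℚ, L q = L 1 * q := fun q => by
    simpa [mul_comm] using map_ratCast_smul L ℝ ℝ q 1
  have hlim : ∀ u : ℕ → ℚ, Tendsto (u · : ℕ → ℝ) atTop (𝓝 t) →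
      Tendsto (fun n => L (u n)) atTop (𝓝 (L 1 * t)) := fun u hu => by
    simpa only [hrat] using hu.const_mul (L 1)
  obtain ⟨lo, -, hlo, hlo_lim⟩ := Real.exists_seq_rat_strictMono_tendsto t
  obtain ⟨hi, -, hhi, hhi_lim⟩ := Real.exists_seq_rat_strictAnti_tendsto t
  exact le_antisymm (ge_of_tendsto' (hlim hi hhi_lim) fun n => hL (hhi n).le)
    (le_of_tendsto' (hlim lo hlo_lim) fun n => hL (hlo n).le)

theorem eq_rpow_of_map_mul_of_monotoneOn {M : ℝ → ℝ} (hpos : ∀ u, 0 < u → 0 < M u)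
    (hmul : ∀ u v, 0 < u → 0 < v → M (u * v) = M u * M v) (hmono : MonotoneOn M (Ioi 0))
    {u : ℝ} (hu : 0 < u) : M u = u ^ Real.log (M (Real.exp 1)) := by
  let L : ℝ →+ ℝ := AddMonoidHom.mk' (fun t => Real.log (M (Real.exp t))) fun s t => by
    simp only [Real.exp_add, hmul _ _ (Real.exp_pos s) (Real.exp_pos t)]
    exact Real.log_mul (hpos _ (Real.exp_pos s)).ne' (hpos _ (Real.exp_pos t)).ne'
  have hL : Monotone L := fun s t hst =>
    Real.log_le_log (hpos _ (Real.exp_pos s))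
      (hmono (Real.exp_pos s) (Real.exp_pos t) (Real.exp_le_exp.mpr hst))
  have hlog : Real.log (M u) = Real.log (M (Real.exp 1)) * Real.log u := by
    simpa [L, Real.exp_log hu] using L.apply_eq_mul_of_monotone hL (Real.log u)
  rw [Real.rpow_def_of_pos hu, mul_comm, ← hlog, Real.exp_log (hpos u hu)]

theorem mul_map_one_eq_of_map_mul_Ioo {Φ g : ℝ → ℝ} (hpos : ∀ u, 0 < u → 0 < Φ u)
    (h : ∀ u, 0 < u → ∀ y ∈ Ioo (0 : ℝ) 1, Φ (u * y) = Φ u * g y)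
    {u v : ℝ} (hu : 0 < u) (hv : 0 < v) : Φ (u * v) * Φ 1 = Φ u * Φ v := by
  have hIoo : ∀ u, 0 < u → ∀ y ∈ Ioo (0 : ℝ) 1, Φ (u * y) * Φ 1 = Φ u * Φ y := by
    intro u hu y hy
    have hy₁ := h 1 one_pos y hy
    rw [one_mul] at hy₁
    rw [h u hu y hy, hy₁]
    ring
  -- both `w` and `v * w` lie in `(0, 1)`, so `Φ (u * v * w) * Φ 1 ^ 2` can be expanded two ways
  set w := (1 + v)⁻¹
  have hw : w ∈ Ioo (0 : ℝ) 1 := ⟨by positivity, inv_lt_one_of_one_lt₀ (by linarith)⟩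
  have hvw : v * w ∈ Ioo (0 : ℝ) 1 :=
    ⟨by positivity, by rw [← div_eq_mul_inv, div_lt_one (by linarith)]; linarith⟩
  have h₁ := hIoo (u * v) (by positivity) w hw
  have h₂ := hIoo u hu (v * w) hvw
  have h₃ := hIoo v hv w hw
  rw [mul_assoc] at h₁
  refine mul_right_cancel₀ (hpos w hw.1).ne' ?_
  linear_combination -Φ 1 * h₁ + Φ 1 * h₂ + Φ u * h₃

theorem exists_rpow_of_map_mul_Ioo {Φ g : ℝ → ℝ} (hpos : ∀ u, 0 < u → 0 < Φ u)
    (hmono : StrictMonoOn Φ (Ioi 0))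
    (h : ∀ u, 0 < u → ∀ y ∈ Ioo (0 : ℝ) 1, Φ (u * y) = Φ u * g y) :
    ∃ c : ℝ, 0 < c ∧ ∀ u, 0 < u → Φ u = Φ 1 * u ^ c := by
  have hΦ₁ := hpos 1 one_pos
  set M := fun u => Φ u / Φ 1
  have hM_mono : StrictMonoOn M (Ioi 0) := fun u hu v hv huv =>
    div_lt_div_of_pos_right (hmono hu hv huv) hΦ₁
  have hM_mul : ∀ u v, 0 < u → 0 < v → M (u * v) = M u * M v := fun u v hu hv => by
    simp only [M, div_mul_div_comm, ← mul_map_one_eq_of_map_mul_Ioo hpos h hu hv]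
    field_simp
  have hM_rpow := fun u (hu : 0 < u) =>
    eq_rpow_of_map_mul_of_monotoneOn (fun u hu => div_pos (hpos u hu) hΦ₁) hM_mul
      hM_mono.monotoneOn hu
  refine ⟨_, Real.log_pos ?_, fun u hu => by rw [← hM_rpow u hu, mul_div_cancel₀ _ hΦ₁.ne']⟩
  simpa [M, div_self hΦ₁.ne'] using
    hM_mono (mem_Ioi.mpr one_pos) (Real.exp_pos 1) (Real.one_lt_exp_iff.mpr one_pos)

noncomputable def odds (x : ℝ) : ℝ := (1 - x) / x

theorem odds_inv_one_add {u : ℝ} (hu : 1 + u ≠ 0) : odds (1 + u)⁻¹ = u := by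
  rw [odds, div_inv_eq_mul, sub_mul, one_mul, inv_mul_cancel₀ hu, add_sub_cancel_left]

theorem inv_one_add_odds {x : ℝ} (hx : x ≠ 0) : (1 + odds x)⁻¹ = x := by
  rw [odds, one_add_div hx, add_sub_cancel, inv_div, div_one]

theorem odds_div_add_mul {x y : ℝ} (h : x + (1 - x) * y ≠ 0) :
    odds (x / (x + (1 - x) * y)) = odds x * y := by
  by_cases hx : x = 0
  · simp [odds, hx]
  unfold odds
  field_simp
  ring

theorem odds_pos {x : ℝ} (hx : x ∈ Ioo (0 : ℝ) 1) : 0 < odds x :=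
  div_pos (sub_pos.mpr hx.2) hx.1

theorem strictAntiOn_odds : StrictAntiOn odds (Ioi 0) := by
  intro x hx y hy hxy
  rw [odds, odds, div_lt_div_iff₀ hy hx]
  linarith

theorem inv_one_add_mem_Ioo {u : ℝ} (hu : 0 < u) : (1 + u)⁻¹ ∈ Ioo (0 : ℝ) 1 :=
  ⟨by positivity, inv_lt_one_of_one_lt₀ (by linarith)⟩

section OddsConj

variable {f g : ℝ → ℝ}

noncomputable def oddsConj (f : ℝ → ℝ) (u : ℝ) : ℝ := odds (f (1 + u)⁻¹)

theorem oddsConj_odds {x : ℝ} (hx : x ≠ 0) : oddsConj f (odds x) = odds (f x) := by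
  rw [oddsConj, inv_one_add_odds hx]

theorem oddsConj_pos (hf : MapsTo f (Ioo 0 1) (Ioo 0 1)) {u : ℝ} (hu : 0 < u) :
    0 < oddsConj f u :=
  odds_pos (hf (inv_one_add_mem_Ioo hu))

theorem strictMonoOn_oddsConj (hf : MapsTo f (Ioo 0 1) (Ioo 0 1))
    (hf_mono : StrictMonoOn f (Ioo 0 1)) : StrictMonoOn (oddsConj f) (Ioi 0) := by
  intro u hu v hv huv
  have hu' := inv_one_add_mem_Ioo (mem_Ioi.mp hu)
  have hv' := inv_one_add_mem_Ioo (mem_Ioi.mp hv)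
  have hinv : (1 + v)⁻¹ < (1 + u)⁻¹ :=
    inv_strictAnti₀ (by linarith [mem_Ioi.mp hu]) (by linarith)
  exact strictAntiOn_odds (hf hv').1 (hf hu').1 (hf_mono hv' hu' hinv)

theorem oddsConj_mul (hf : MapsTo f (Ioo 0 1) (Ioo 0 1)) (hg : MapsTo g (Ioo 0 1) (Ioo 0 1))
    (hfe : ∀ x ∈ Ioo (0 : ℝ) 1, ∀ y ∈ Ioo (0 : ℝ) 1,
      f (x / (x + (1 - x) * y)) = f x / (f x + (1 - f x) * g y))
    {u y : ℝ} (hu : 0 < u) (hy : y ∈ Ioo (0 : ℝ) 1) :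
    oddsConj f (u * y) = oddsConj f u * g y := by
  set x := (1 + u)⁻¹
  have hx : x ∈ Ioo (0 : ℝ) 1 := inv_one_add_mem_Ioo hu
  have hfx := hf hx
  have hden : 0 < x + (1 - x) * y := by
    nlinarith [mul_pos (sub_pos.mpr hx.2) hy.1, hx.1]
  have hfden : 0 < f x + (1 - f x) * g y := by
    nlinarith [mul_pos (sub_pos.mpr hfx.2) (hg hy).1, hfx.1]
  have hxy : x / (x + (1 - x) * y) = (1 + u * y)⁻¹ := by
    rw [← odds_inv_one_add (u := u) (by linarith), ← odds_div_add_mul hden.ne',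
      inv_one_add_odds (div_pos hx.1 hden).ne']
  rw [oddsConj, oddsConj, ← hxy, hfe x hx y hy, odds_div_add_mul hfden.ne']

end OddsConj

theorem functional_equation_solution (f g : ℝ → ℝ)
    (hf_maps : Set.BijOn f (Set.Ioo (0:ℝ) 1) (Set.Ioo (0:ℝ) 1))
    (hf_mono : StrictMonoOn f (Set.Ioo (0:ℝ) 1))
    (hg_maps : Set.MapsTo g (Set.Ioo (0:ℝ) 1) (Set.Ioo (0:ℝ) 1))
    (hfe : ∀ x ∈ Set.Ioo (0:ℝ) 1, ∀ y ∈ Set.Ioo (0:ℝ) 1,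
      f (x / (x + (1 - x) * y)) = f x / (f x + (1 - f x) * g y)) :
    ∃ a b c : ℝ, 0 < a ∧ 0 < b ∧ 0 < c ∧
      (∀ x ∈ Set.Ioo (0:ℝ) 1, f x = x ^ c / (x ^ c + a * (1 - x) ^ c)) ∧
      (∀ y ∈ Set.Ioo (0:ℝ) 1, g y = b * y ^ c) := by
  set Φ := oddsConj f
  have hΦ_mul : ∀ u, 0 < u → ∀ y ∈ Ioo (0 : ℝ) 1, Φ (u * y) = Φ u * g y :=
    fun u hu y hy => oddsConj_mul hf_maps.mapsTo hg_maps hfe hu hy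
  have hΦ_pos : ∀ u, 0 < u → 0 < Φ u := fun u hu => oddsConj_pos hf_maps.mapsTo hu
  have hΦ₁ := hΦ_pos 1 one_pos
  obtain ⟨c, hc, hΦ_rpow⟩ :=
    exists_rpow_of_map_mul_Ioo hΦ_pos (strictMonoOn_oddsConj hf_maps.mapsTo hf_mono) hΦ_mul
  have hg : ∀ y ∈ Ioo (0 : ℝ) 1, g y = y ^ c := fun y hy => by
    have hy₁ := hΦ_mul 1 one_pos y hy
    rw [one_mul, hΦ_rpow y hy.1] at hy₁
    exact (mul_left_cancel₀ hΦ₁.ne' hy₁).symm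
  refine ⟨Φ 1, 1, c, hΦ₁, one_pos, hc, fun x hx => ?_, fun y hy => by rw [one_mul, hg y hy]⟩
  have hodds : odds (f x) = Φ 1 * ((1 - x) ^ c / x ^ c) := by
    rw [← oddsConj_odds hx.1.ne']
    change Φ (odds x) = _
    rw [hΦ_rpow _ (odds_pos hx), odds,
      Real.div_rpow (sub_pos.mpr hx.2).le hx.1.le]
  have hxc := Real.rpow_pos_of_pos hx.1 c
  rw [← inv_one_add_odds (hf_maps.mapsTo hx).1.ne', hodds]
  field_simp
end

section
/- Let F : ℝ → ℝ, G : ℝ → ℝ, H : (-∞,0) → ℝ be continuous functions satisfying the Pexider equation F(u+v) = G(u) + H(v) for all u ∈ ℝ and v < 0. Then there exist real constants a, b, c such that F(w) = cw + a + b for all w ∈ ℝ, G(u) = cu + a for all u ∈ ℝ, and H(v) = cv + b for all v < 0. -/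
/-!
Subtracting the equation at `u = 0` gives `F (u + v) - F v = G u - G 0` for every `v < 0`, so
`g u := G u - G 0` is the increment of `F` over any interval of length `u` ending below `0`.
Chaining two such increments shows that `g` is additive, and `g u = F (u - 1) - F (-1)` is
continuous because `F` is; a continuous additive function on `ℝ` is linear.
-/

section Pexider

variable {β : Type*} [AddCommGroup β] {F G H : ℝ → β}

theorem pexider_sub_eq_sub (h : ∀ u : ℝ, ∀ v < (0:ℝ), F (u + v) = G u + H v)
    (u : ℝ) {v : ℝ} (hv : v < 0) : F (u + v) - F v = G u - G 0 := by
  have h0 := h 0 v hv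
  rw [zero_add] at h0
  rw [h u v hv, h0]
  abel

theorem pexider_map_add_sub (h : ∀ u : ℝ, ∀ v < (0:ℝ), F (u + v) = G u + H v) (x y : ℝ) :
    G (x + y) - G 0 = (G x - G 0) + (G y - G 0) := by
  set v : ℝ := -|y| - 1
  have hv : v < 0 := by linarith [abs_nonneg y]
  have hyv : y + v < 0 := by linarith [le_abs_self y]
  calc G (x + y) - G 0 = F (x + y + v) - F v := (pexider_sub_eq_sub h _ hv).symm
    _ = (F (x + (y + v)) - F (y + v)) + (F (y + v) - F v) := by rw [add_assoc]; abel
    _ = (G x - G 0) + (G y - G 0) := by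
      rw [pexider_sub_eq_sub h x hyv, pexider_sub_eq_sub h y hv]

end Pexider

theorem pexider_exists_linear {F G H : ℝ → ℝ} (hF : Continuous F)
    (h : ∀ u : ℝ, ∀ v < (0:ℝ), F (u + v) = G u + H v) :
    ∃ c : ℝ, ∀ u : ℝ, G u = c * u + G 0 := by
  let g : ℝ →+ ℝ := AddMonoidHom.mk' (fun u => G u - G 0) (pexider_map_add_sub h)
  have hg_eq : ⇑g = fun u => F (u + -1) - F (-1) :=
    funext fun u => (pexider_sub_eq_sub h u (by norm_num)).symm
  have hg : Continuous g := by rw [hg_eq]; fun_prop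
  refine ⟨g 1, fun u => ?_⟩
  have hlin : g u = u * g 1 := by simpa using map_real_smul g hg u 1
  have hgu : g u = G u - G 0 := rfl
  linarith

theorem pexider_equation_general (F G H : ℝ → ℝ)
    (hF : Continuous F)
    (h : ∀ u : ℝ, ∀ v < (0:ℝ), F (u + v) = G u + H v) :
    ∃ a b c : ℝ, (∀ w : ℝ, F w = c * w + a + b) ∧ (∀ u : ℝ, G u = c * u + a) ∧
      (∀ v < (0:ℝ), H v = c * v + b) := by
  obtain ⟨c, hG⟩ := pexider_exists_linear hF h
  have hFw : ∀ w, F w = c * w + G 0 + (c + H (-1)) := fun w => by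
    have := h (w + 1) (-1) (by norm_num)
    rw [add_neg_cancel_right, hG] at this
    rw [this]; ring
  refine ⟨G 0, c + H (-1), c, hFw, hG, fun v hv => ?_⟩
  have := h 0 v hv
  rw [zero_add, hFw] at this
  linarith

theorem pexider_equation (F G H : ℝ → ℝ)
    (hF : Continuous F) (hG : Continuous G) (hH : ContinuousOn H (Set.Iio (0:ℝ)))
    (h : ∀ u : ℝ, ∀ v < (0:ℝ), F (u + v) = G u + H v) :
    ∃ a b c : ℝ, (∀ w : ℝ, F w = c * w + a + b) ∧ (∀ u : ℝ, G u = c * u + a) ∧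
      (∀ v < (0:ℝ), H v = c * v + b) :=
  pexider_equation_general F G H hF h
end

section
/- Let H be a complex Hilbert space and A, B ∈ E(H). Then A·B = 0 if and only if the range projection of A and the range projection of B are mutually orthogonal (their product is zero). -/
/-!
For self-adjoint `A`, `A B = 0` says that the range of `B` lies in `ker A = (range A)ᗮ`, i.e. that
the ranges of `A` and `B` are orthogonal. Two orthogonal projections multiply to zero exactly when
their ranges are orthogonal, and orthogonality of subspaces passes to their closures.
-/

/-- The range projection of a bounded operator: the orthogonal projection onto the
closure of its range, viewed as an operator on `H`. -/
noncomputable def rangeProjection {H : Type*} [NormedAddCommGroup H]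
    [InnerProductSpace ℂ H] [CompleteSpace H] (A : H →L[ℂ] H) : H →L[ℂ] H :=
  ((LinearMap.range (A : H →ₗ[ℂ] H)).topologicalClosure).subtypeL ∘L
    Submodule.orthogonalProjection (LinearMap.range (A : H →ₗ[ℂ] H)).topologicalClosure

theorem Submodule.isOrtho_topologicalClosure_iff {𝕜 E : Type*} [RCLike 𝕜]
    [NormedAddCommGroup E] [InnerProductSpace 𝕜 E] {U V : Submodule 𝕜 E} :
    U.topologicalClosure ⟂ V.topologicalClosure ↔ U ⟂ V := by
  refine ⟨fun h => h.mono (le_topologicalClosure U) (le_topologicalClosure V), fun h => ?_⟩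
  rw [isOrtho_iff_le, orthogonal_closure]
  exact topologicalClosure_minimal _ h.le (isClosed_orthogonal V)

section Adjoint

variable {𝕜 E F : Type*} [RCLike 𝕜] [NormedAddCommGroup E] [InnerProductSpace 𝕜 E]
  [CompleteSpace E] [NormedAddCommGroup F] [InnerProductSpace 𝕜 F] [CompleteSpace F]

open ContinuousLinearMap in
theorem ContinuousLinearMap.comp_eq_zero_iff_isOrtho_range_adjoint
    {A : F →L[𝕜] E} {B : E →L[𝕜] F} :
    A ∘L B = 0 ↔ (adjoint A).range ⟂ B.range := by
  rw [Submodule.isOrtho_comm, Submodule.isOrtho_iff_le, orthogonal_range, adjoint_adjoint,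
    LinearMap.range_le_ker_iff]
  exact coe_inj.symm

theorem IsSelfAdjoint.mul_eq_zero_iff_isOrtho_range {A B : E →L[𝕜] E} (hA : IsSelfAdjoint A) :
    A * B = 0 ↔ A.range ⟂ B.range := by
  rw [ContinuousLinearMap.mul_def, ContinuousLinearMap.comp_eq_zero_iff_isOrtho_range_adjoint,
    hA.adjoint_eq]

end Adjoint

section RangeProjection

variable {H : Type*} [NormedAddCommGroup H] [InnerProductSpace ℂ H] [CompleteSpace H]

theorem rangeProjection_eq_starProjection (A : H →L[ℂ] H) :
    rangeProjection A = (LinearMap.range (A : H →ₗ[ℂ] H)).topologicalClosure.starProjection :=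
  rfl

theorem rangeProjection_mul_rangeProjection_eq_zero_iff (A B : H →L[ℂ] H) :
    rangeProjection A * rangeProjection B = 0 ↔ A.range ⟂ B.range := by
  rw [rangeProjection_eq_starProjection, rangeProjection_eq_starProjection,
    ContinuousLinearMap.mul_def, Submodule.starProjection_comp_starProjection_eq_zero_iff,
    Submodule.isOrtho_topologicalClosure_iff]

end RangeProjection

theorem zero_product_iff_orthogonal_range_projections_general
    {H : Type*} [NormedAddCommGroup H] [InnerProductSpace ℂ H] [CompleteSpace H]
    (A B : H →L[ℂ] H) (hA : 0 ≤ A ∧ A ≤ 1) :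
    A * B = 0 ↔ rangeProjection A * rangeProjection B = 0 := by
  rw [(IsSelfAdjoint.of_nonneg hA.1).mul_eq_zero_iff_isOrtho_range,
    rangeProjection_mul_rangeProjection_eq_zero_iff]

theorem zero_product_iff_orthogonal_range_projections
    {H : Type*} [NormedAddCommGroup H] [InnerProductSpace ℂ H] [CompleteSpace H]
    (A B : H →L[ℂ] H) (hA : 0 ≤ A ∧ A ≤ 1) (hB : 0 ≤ B ∧ B ≤ 1) :
    A * B = 0 ↔ rangeProjection A * rangeProjection B = 0 :=
  zero_product_iff_orthogonal_range_projections_general A B hA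
end

section
/- Let H be a complex Hilbert space with dim H ≥ 2 and let φ : E(H) → E(H) be a bijection preserving the order in both directions (A ≤ B ⟺ φ(A) ≤ φ(B)). Then φ maps the set of orthogonal projections in E(H) bijectively onto itself, and preserves the rank of finite-rank projections. -/
/-!
An order automorphism of the effect algebra `E(H) = [0, 1]` preserves everything that can be
defined from the order alone. The rank-one projections are exactly the effects `A` that are
maximal among those whose lower interval `[0, A]` is a chain: below a rank-one projection there
are only its multiples, while below an effect `A` of rank at least two lie the incomparable
rank-one effects `|A u⟩⟨A u|`, `|A v⟩⟨A v|` for suitable unit vectors `u`, `v`. An effect is a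
projection iff it is the supremum in `E(H)` of a set of rank-one projections (those onto the lines
it fixes), and a projection has finite rank at most `n` iff it is the supremum of at most `n` of
them. Applying this to `φ` and `φ⁻¹` gives the theorem.
-/

open InnerProductSpace ContinuousLinearMap Submodule Module
open scoped InnerProductSpace

section Order

variable {α β : Type*} [PartialOrder α] [PartialOrder β]

def IsMaxChainIic (a : α) : Prop := Maximal (fun b ↦ IsChain (· ≤ ·) (Set.Iic b)) a

def IsLUBOfAtMost (P : α → Prop) (k : ℕ∞) (a : α) : Prop :=
  ∃ s : Set α, s.encard ≤ k ∧ (∀ b ∈ s, P b) ∧ IsLUB s a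

theorem Set.Icc.isChain_Iic_iff {a b : α} (c : Set.Icc a b) :
    IsChain (· ≤ ·) (Set.Iic c) ↔ IsChain (· ≤ ·) (Set.Icc a (c : α)) := by
  rw [← Set.image_subtype_val_Icc_Iic]
  exact (IsChain.image_relEmbedding_iff (φ := OrderEmbedding.subtype _)).symm

theorem OrderIso.maximal_apply_iff (e : α ≃o β) {P : β → Prop} {a : α} :
    Maximal P (e a) ↔ Maximal (fun b ↦ P (e b)) a := by
  simp only [Maximal, e.surjective.forall, e.le_iff_le]

theorem OrderIso.isChain_Iic_apply_iff (e : α ≃o β) {a : α} :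
    IsChain (· ≤ ·) (Set.Iic (e a)) ↔ IsChain (· ≤ ·) (Set.Iic a) := by
  rw [← e.image_Iic]
  exact IsChain.image_relEmbedding_iff (φ := e.toOrderEmbedding)

theorem OrderIso.isMaxChainIic_apply_iff (e : α ≃o β) {a : α} :
    IsMaxChainIic (e a) ↔ IsMaxChainIic a := by
  simp only [IsMaxChainIic, e.maximal_apply_iff, e.isChain_Iic_apply_iff]

theorem IsLUBOfAtMost.map {P : α → Prop} {Q : β → Prop} {k : ℕ∞} {a : α}
    (h : IsLUBOfAtMost P k a) (e : α ≃o β) (hPQ : ∀ b, P b → Q (e b)) :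
    IsLUBOfAtMost Q k (e a) := by
  obtain ⟨s, hs, hP, hlub⟩ := h
  exact ⟨e '' s, (Set.encard_image_le e s).trans hs,
    Set.forall_mem_image.2 fun b hb ↦ hPQ b (hP b hb), e.isLUB_image'.2 hlub⟩

theorem OrderIso.isLUBOfAtMost_isMaxChainIic_apply_iff (e : α ≃o β) {k : ℕ∞} {a : α} :
    IsLUBOfAtMost IsMaxChainIic k (e a) ↔ IsLUBOfAtMost IsMaxChainIic k a := by
  refine ⟨fun h ↦ ?_, fun h ↦ h.map e fun b ↦ e.isMaxChainIic_apply_iff.2⟩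
  simpa using h.map e.symm fun b hb ↦ by rwa [← e.isMaxChainIic_apply_iff, e.apply_symm_apply]

end Order

noncomputable def Set.BijOn.orderIso {α β : Type*} [Preorder α] [Preorder β] {s : Set α}
    {t : Set β} (f : α → β) (h : Set.BijOn f s t) (hf : ∀ a ∈ s, ∀ b ∈ s, a ≤ b ↔ f a ≤ f b) :
    s ≃o t where
  toEquiv := h.equiv f
  map_rel_iff' {a b} := (hf a a.2 b b.2).symm

namespace IsStarProjection

variable {A : Type*} [CStarAlgebra A] [PartialOrder A] [StarOrderedRing A] {p a : A}

omit [PartialOrder A] [StarOrderedRing A] in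
theorem sub_eq_conjugate (hp : IsStarProjection p) (ha : IsSelfAdjoint a) (h : a * p = p) :
    a - p = (1 - p) * a * (1 - p) := by
  have h' : p * a = p := by simpa [hp.isSelfAdjoint.star_eq, ha.star_eq] using congr(star $h)
  simp only [sub_mul, mul_sub, one_mul, mul_one, h, h', hp.isIdempotentElem.eq]
  abel

theorem le_iff_mul_eq_of_mem_Icc (hp : IsStarProjection p) (ha : a ∈ Set.Icc 0 1) :
    p ≤ a ↔ a * p = p := by
  refine ⟨fun hpa ↦ ?_, fun h ↦ ?_⟩
  · have h := (hp.one_sub.mul_right_and_mul_left_of_nonneg_of_le (sub_nonneg.2 ha.2)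
      (sub_le_sub_left hpa 1)).1
    rw [← sub_eq_zero] at h ⊢
    rw [← h]
    noncomm_ring
  · rw [← sub_nonneg, hp.sub_eq_conjugate ha.1.isSelfAdjoint h]
    exact hp.one_sub.isSelfAdjoint.conjugate_nonneg ha.1

theorem le_of_mul_eq_of_le_one (hp : IsStarProjection p) (ha : IsSelfAdjoint a) (ha1 : a ≤ 1)
    (h : p * a = a) : a ≤ p := by
  have h' : a * p = a := by simpa [hp.isSelfAdjoint.star_eq, ha.star_eq] using congr(star $h)
  calc a = p * a * p := by rw [h, h']
    _ ≤ p * 1 * p := hp.isSelfAdjoint.conjugate_le_conjugate ha1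
    _ = p := by rw [mul_one, hp.isIdempotentElem.eq]

/-- The decomposition `a = p + (1 - p) a (1 - p)` yields two elements of `[0, a]` that can only
be comparable if `a = p`. -/
theorem eq_of_le_of_isChain_Icc (hp : IsStarProjection p) (hp0 : p ≠ 0) (hpa : p ≤ a)
    (ha : a ≤ 1) (hchain : IsChain (· ≤ ·) (Set.Icc 0 a)) : a = p := by
  have hd := hp.sub_eq_conjugate (hp.nonneg.trans hpa).isSelfAdjoint
    ((hp.le_iff_mul_eq_of_mem_Icc ⟨hp.nonneg.trans hpa, ha⟩).1 hpa)
  have hd0 : 0 ≤ a - p := sub_nonneg.2 hpa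
  rcases hchain.total ⟨hp.nonneg, hpa⟩ ⟨hd0, sub_le_self a hp.nonneg⟩ with h | h
  · refine absurd (le_antisymm ?_ hp.nonneg) hp0
    calc p = p * p * p := by rw [hp.isIdempotentElem.eq, hp.isIdempotentElem.eq]
      _ ≤ p * (a - p) * p := hp.isSelfAdjoint.conjugate_le_conjugate h
      _ = 0 := by simp only [hd, ← mul_assoc, hp.mul_one_sub_self, zero_mul]
  · refine sub_eq_zero.1 (le_antisymm ?_ hd0)
    calc a - p = (1 - p) * (a - p) * (1 - p) := by
          rw [mul_sub (1 - p) a p, hp.one_sub_mul_self, sub_zero, ← hd]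
      _ ≤ (1 - p) * p * (1 - p) := hp.one_sub.isSelfAdjoint.conjugate_le_conjugate h
      _ = 0 := by rw [hp.one_sub_mul_self, zero_mul]

end IsStarProjection

theorem span_inter_sphere {𝕜 E : Type*} [RCLike 𝕜] [NormedAddCommGroup E] [NormedSpace 𝕜 E]
    (K : Submodule 𝕜 E) : span 𝕜 ((K : Set E) ∩ Metric.sphere 0 1) = K := by
  refine le_antisymm (span_le.2 Set.inter_subset_left) fun z hz ↦ ?_
  rcases eq_or_ne z 0 with rfl | hz0
  · exact zero_mem _
  · have : (‖z‖⁻¹ : 𝕜) • z ∈ span 𝕜 ((K : Set E) ∩ Metric.sphere 0 1) :=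
      subset_span ⟨K.smul_mem _ hz, by simpa using norm_smul_inv_norm (𝕜 := 𝕜) hz0⟩
    exact (smul_mem_iff _ (by simpa using hz0)).1 this

section Hilbert

variable {H : Type*} [NormedAddCommGroup H] [InnerProductSpace ℂ H]

theorem starProjection_span_singleton {x : H} (hx : ‖x‖ = 1) :
    (ℂ ∙ x).starProjection = rankOne ℂ x x := by
  ext y
  simp [starProjection_unit_singleton ℂ hx]

theorem rankOne_mul_mul_rankOne (x : H) (B : H →L[ℂ] H) :
    rankOne ℂ x x * B * rankOne ℂ x x = ⟪x, B x⟫_ℂ • rankOne ℂ x x := by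
  ext y
  simp [smul_smul, mul_comm]

theorem mem_span_singleton_of_rankOne_le {a b : H} (h : rankOne ℂ a a ≤ rankOne ℂ b b) :
    a ∈ ℂ ∙ b := by
  rw [← (ℂ ∙ b).orthogonal_orthogonal, mem_orthogonal]
  intro y hy
  rw [mem_orthogonal_singleton_iff_inner_right] at hy
  have := ((le_def _ _).1 h).re_inner_nonneg_right y
  rw [sub_apply, inner_sub_right, inner_right_rankOne_apply, inner_right_rankOne_apply, hy,
    mul_zero, zero_sub, map_neg, inner_mul_symm_re_eq_norm, neg_nonneg, norm_le_zero_iff,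
    mul_eq_zero, inner_eq_zero_symm (x := a)] at this
  exact this.elim id id

variable [CompleteSpace H]

local notation "𝓔" => Set.Icc (0 : H →L[ℂ] H) 1

theorem eq_inner_smul_rankOne_of_le {x : H} (hx : ‖x‖ = 1) {B : H →L[ℂ] H} (hB : 0 ≤ B)
    (hBx : B ≤ rankOne ℂ x x) : B = ⟪x, B x⟫_ℂ • rankOne ℂ x x := by
  conv_lhs => rw [← (isStarProjection_rankOne_self hx).conjugate_of_nonneg_of_le hB hBx]
  exact rankOne_mul_mul_rankOne x B

theorem isChain_Icc_rankOne {x : H} (hx : ‖x‖ = 1) :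
    IsChain (· ≤ ·) (Set.Icc 0 (rankOne ℂ x x)) := by
  intro B ⟨hB0, hB⟩ C ⟨hC0, hC⟩ _
  obtain ⟨s, -, hs⟩ := RCLike.nonneg_iff_exists_ofReal.1 <|
    ((nonneg_iff_isPositive B).1 hB0).inner_nonneg_right x
  obtain ⟨t, -, ht⟩ := RCLike.nonneg_iff_exists_ofReal.1 <|
    ((nonneg_iff_isPositive C).1 hC0).inner_nonneg_right x
  rw [eq_inner_smul_rankOne_of_le hx hB0 hB, eq_inner_smul_rankOne_of_le hx hC0 hC, ← hs, ← ht]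
  have hmono : Monotone fun r : ℝ ↦ (r : ℂ) • rankOne ℂ x x := fun r r' h ↦ by
    rw [le_def, ← sub_smul, ← Complex.ofReal_sub]
    exact (isPositive_rankOne_self x).smul_of_nonneg (Complex.zero_le_real.2 (sub_nonneg.2 h))
  exact (le_total s t).imp (fun h ↦ hmono h) (fun h ↦ hmono h)

theorem rankOne_apply_self_mem_Icc {A : H →L[ℂ] H} (hA : A ∈ 𝓔) {u : H} (hu : ‖u‖ = 1) :
    rankOne ℂ (A u) (A u) ∈ Set.Icc 0 A := by
  have hsa := IsSelfAdjoint.of_nonneg hA.1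
  have hu' := isStarProjection_rankOne_self (𝕜 := ℂ) hu
  have hconj : rankOne ℂ (A u) (A u) = A * rankOne ℂ u u * A := by
    rw [ContinuousLinearMap.mul_def, ContinuousLinearMap.mul_def, comp_rankOne, rankOne_comp,
      hsa.adjoint_eq]
  rw [hconj]
  refine ⟨hsa.conjugate_nonneg hu'.nonneg, ?_⟩
  calc A * rankOne ℂ u u * A ≤ A * 1 * A := hsa.conjugate_le_conjugate hu'.le_one
    _ = A ^ 2 := by rw [mul_one, sq]
    _ ≤ A ^ 1 := CStarAlgebra.pow_antitone hA.1 hA.2 one_le_two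
    _ = A := pow_one A

theorem exists_forall_apply_mem_span_singleton_of_isChain_Icc {A : H →L[ℂ] H} (hA : A ∈ 𝓔)
    (hA0 : A ≠ 0) (hchain : IsChain (· ≤ ·) (Set.Icc 0 A)) :
    ∃ p : H, ‖p‖ = 1 ∧ ∀ y, A y ∈ ℂ ∙ p := by
  obtain ⟨y₀, hy₀⟩ : ∃ y, A y ≠ 0 := by
    by_contra! h
    exact hA0 (ext h)
  have hy₀' : y₀ ≠ 0 := by rintro rfl; exact hy₀ (map_zero A)
  set u₀ := (‖y₀‖⁻¹ : ℂ) • y₀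
  have hu₀ : ‖u₀‖ = 1 := norm_smul_inv_norm hy₀'
  set a := A u₀
  have ha : a ≠ 0 := by simpa [a, u₀, hy₀'] using hy₀
  -- `|A u⟩⟨A u|` and `|a⟩⟨a|` lie in the chain `[0, A]`, so `A u` and `a` are collinear.
  have hunit : ∀ u, ‖u‖ = 1 → A u ∈ ℂ ∙ a := by
    intro u hu
    rcases hchain.total (rankOne_apply_self_mem_Icc hA hu)
      (rankOne_apply_self_mem_Icc hA hu₀) with h | h
    · exact mem_span_singleton_of_rankOne_le h
    · obtain ⟨c, hc⟩ := mem_span_singleton.1 (mem_span_singleton_of_rankOne_le h)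
      have hc0 : c ≠ 0 := by rintro rfl; exact ha (by simpa using hc.symm)
      exact mem_span_singleton.2 ⟨c⁻¹, by simp [a, ← hc, smul_smul, hc0]⟩
  refine ⟨(‖a‖⁻¹ : ℂ) • a, norm_smul_inv_norm ha, fun y ↦ ?_⟩
  rw [span_singleton_smul_eq (by simpa using ha)]
  rcases eq_or_ne y 0 with rfl | hy
  · simp
  · have := hunit _ (norm_smul_inv_norm (𝕜 := ℂ) hy)
    rwa [map_smul, smul_mem_iff _ (by simpa using hy)] at this

theorem le_starProjection_of_forall_apply_mem (K : Submodule ℂ H) [K.HasOrthogonalProjection]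
    {A : H →L[ℂ] H} (hA : IsSelfAdjoint A) (hA1 : A ≤ 1) (h : ∀ y, A y ∈ K) :
    A ≤ K.starProjection :=
  isStarProjection_starProjection.le_of_mul_eq_of_le_one hA hA1 <|
    ext fun y ↦ starProjection_eq_self_iff.2 (h y)

theorem isMaxChainIic_iff_exists_eq_rankOne [Nontrivial H] {A : 𝓔} :
    IsMaxChainIic A ↔ ∃ x : H, ‖x‖ = 1 ∧ (A : H →L[ℂ] H) = rankOne ℂ x x := by
  let R (x : H) (hx : ‖x‖ = 1) : 𝓔 := ⟨rankOne ℂ x x, (isStarProjection_rankOne_self hx).mem_Icc⟩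
  have hR {x : H} (hx : ‖x‖ = 1) : IsChain (· ≤ ·) (Set.Iic (R x hx)) :=
    (Set.Icc.isChain_Iic_iff _).2 (isChain_Icc_rankOne hx)
  have hR0 {x : H} (hx : ‖x‖ = 1) : rankOne ℂ x x ≠ 0 :=
    rankOne_ne_zero (norm_ne_zero_iff.1 (hx ▸ one_ne_zero)) (norm_ne_zero_iff.1 (hx ▸ one_ne_zero))
  constructor
  · rintro ⟨hA, hmax⟩
    have hA0 : (A : H →L[ℂ] H) ≠ 0 := by
      obtain ⟨x, hx⟩ := exists_norm_eq H zero_le_one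
      intro h0
      have hAR : (A : H →L[ℂ] H) ≤ rankOne ℂ x x := by
        rw [h0]
        exact (R x hx).2.1
      have hRA : rankOne ℂ x x ≤ (A : H →L[ℂ] H) := hmax (y := R x hx) (hR hx) hAR
      exact hR0 hx (le_antisymm (h0 ▸ hRA) (R x hx).2.1)
    obtain ⟨p, hp, hAp⟩ := exists_forall_apply_mem_span_singleton_of_isChain_Icc A.2 hA0
      ((Set.Icc.isChain_Iic_iff A).1 hA)
    have hle : (A : H →L[ℂ] H) ≤ rankOne ℂ p p := starProjection_span_singleton hp ▸
      le_starProjection_of_forall_apply_mem _ (IsSelfAdjoint.of_nonneg A.2.1) A.2.2 hAp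
    exact ⟨p, hp, le_antisymm hle (hmax (y := R p hp) (hR hp) hle)⟩
  · rintro ⟨x, hx, hAx⟩
    refine ⟨(Set.Icc.isChain_Iic_iff A).2 (by rw [hAx]; exact isChain_Icc_rankOne hx),
      fun B hB hAB ↦ ?_⟩
    exact ((isStarProjection_rankOne_self hx).eq_of_le_of_isChain_Icc (hR0 hx) (hAx ▸ hAB) B.2.2
      ((Set.Icc.isChain_Iic_iff B).1 hB)).trans hAx.symm |>.le

theorem isLUB_setOf_rankOne {ι : Type*} (v : ι → H) (hv : ∀ i, ‖v i‖ = 1) (K : Submodule ℂ H)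
    [K.HasOrthogonalProjection] (hvK : ∀ i, v i ∈ K)
    (hK : K ≤ (span ℂ (Set.range v)).topologicalClosure) :
    IsLUB {B : 𝓔 | ∃ i, (B : H →L[ℂ] H) = rankOne ℂ (v i) (v i)}
      ⟨K.starProjection, isStarProjection_starProjection.mem_Icc⟩ := by
  refine ⟨?_, fun C hC ↦ ?_⟩
  · rintro B ⟨i, hB⟩
    change (B : H →L[ℂ] H) ≤ K.starProjection
    rw [hB, ← starProjection_span_singleton (hv i), starProjection_le_starProjection_iff,
      span_singleton_le_iff_mem]
    exact hvK i
  · have hfix (i : ι) : (C : H →L[ℂ] H) (v i) = v i := by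
      have hi := isStarProjection_rankOne_self (𝕜 := ℂ) (hv i)
      have h := (hi.le_iff_mul_eq_of_mem_Icc C.2).1 (hC (a := ⟨_, hi.mem_Icc⟩) ⟨i, rfl⟩)
      simpa [hv i] using congr($h (v i))
    have hKC : K ≤ LinearMap.ker (((C : H →L[ℂ] H) - 1 : H →L[ℂ] H) : H →ₗ[ℂ] H) :=
      hK.trans <| topologicalClosure_minimal _
        (span_le.2 (Set.range_subset_iff.2 fun i ↦ by simp [hfix i])) (isClosed_ker _)
    refine (isStarProjection_starProjection.le_iff_mul_eq_of_mem_Icc C.2).2 (ext fun y ↦ ?_)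
    simpa [sub_eq_zero] using hKC (K.starProjection_apply_mem y)

theorem exists_eq_starProjection_of_isLUB {s : Set 𝓔}
    (hs : ∀ B ∈ s, ∃ x : H, ‖x‖ = 1 ∧ (B : H →L[ℂ] H) = rankOne ℂ x x) {A : 𝓔}
    (hA : IsLUB s A) :
    ∃ v : s → H, (A : H →L[ℂ] H) = (span ℂ (Set.range v)).topologicalClosure.starProjection := by
  choose v hv hBv using fun B : s ↦ hs B B.2
  have hs : s = {B : 𝓔 | ∃ i, (B : H →L[ℂ] H) = rankOne ℂ (v i) (v i)} := by
    ext B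
    refine ⟨fun hB ↦ ⟨⟨B, hB⟩, hBv ⟨B, hB⟩⟩, ?_⟩
    rintro ⟨i, hi⟩
    rw [Subtype.ext (hi.trans (hBv i).symm)]
    exact i.2
  refine ⟨v, congrArg Subtype.val
    (hA.unique (b := ⟨_, isStarProjection_starProjection.mem_Icc⟩) ?_)⟩
  have h := isLUB_setOf_rankOne v hv _
    (fun i ↦ le_topologicalClosure _ (subset_span (Set.mem_range_self i))) le_rfl
  rwa [← hs] at h

theorem isLUBOfAtMost_top_iff_isStarProjection [Nontrivial H] (A : 𝓔) :
    IsLUBOfAtMost IsMaxChainIic ⊤ A ↔ IsStarProjection (A : H →L[ℂ] H) := by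
  simp only [IsLUBOfAtMost, isMaxChainIic_iff_exists_eq_rankOne, le_top, true_and]
  refine ⟨fun ⟨s, hs, hA⟩ ↦ ?_, fun hA ↦ ?_⟩
  · obtain ⟨v, hv⟩ := exists_eq_starProjection_of_isLUB hs hA
    exact hv ▸ isStarProjection_starProjection
  · obtain ⟨_, hAK⟩ := isStarProjection_iff_eq_starProjection_range.1 hA
    set K := LinearMap.range (A : H →ₗ[ℂ] H)
    let v : ((K : Set H) ∩ Metric.sphere 0 1 : Set H) → H := Subtype.val
    refine ⟨{B : 𝓔 | ∃ i, (B : H →L[ℂ] H) = rankOne ℂ (v i) (v i)},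
      fun B ⟨i, hB⟩ ↦ ⟨v i, by simpa using i.2.2, hB⟩, ?_⟩
    rw [show A = ⟨K.starProjection, _⟩ from Subtype.ext hAK]
    refine isLUB_setOf_rankOne v (fun i ↦ by simpa using i.2.2) K (fun i ↦ i.2.1) ?_
    rw [Subtype.range_coe, span_inter_sphere]
    exact le_topologicalClosure K

theorem isLUBOfAtMost_iff_finrank_le [Nontrivial H] (A : 𝓔) (n : ℕ) :
    IsLUBOfAtMost IsMaxChainIic n A ↔ IsStarProjection (A : H →L[ℂ] H) ∧
      FiniteDimensional ℂ (LinearMap.range (A : H →ₗ[ℂ] H)) ∧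
      finrank ℂ (LinearMap.range (A : H →ₗ[ℂ] H)) ≤ n := by
  simp only [IsLUBOfAtMost, isMaxChainIic_iff_exists_eq_rankOne]
  refine ⟨fun ⟨s, hsn, hs, hA⟩ ↦ ?_, fun ⟨hA, hfin, hn⟩ ↦ ?_⟩
  · obtain ⟨v, hv⟩ := exists_eq_starProjection_of_isLUB hs hA
    have : Fintype s := (Set.finite_of_encard_le_coe hsn).fintype
    have : FiniteDimensional ℂ (span ℂ (Set.range v)) :=
      FiniteDimensional.span_of_finite ℂ (Set.finite_range v)
    have hrange : LinearMap.range (A : H →ₗ[ℂ] H) = span ℂ (Set.range v) := by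
      rw [hv, range_starProjection, (closed_of_finiteDimensional _).submodule_topologicalClosure_eq]
    rw [hrange]
    refine ⟨hv ▸ isStarProjection_starProjection, inferInstance,
      (finrank_range_le_card v).trans ?_⟩
    rw [← Nat.card_eq_fintype_card, Nat.card_coe_set_eq]
    exact (Set.encard_le_coe_iff_finite_ncard_le.1 hsn).2
  · obtain ⟨_, hAK⟩ := isStarProjection_iff_eq_starProjection_range.1 hA
    set K := LinearMap.range (A : H →ₗ[ℂ] H)
    let b := stdOrthonormalBasis ℂ K
    let v : Fin (finrank ℂ K) → H := fun i ↦ b i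
    have hv (i) : ‖v i‖ = 1 := b.orthonormal.1 i
    let f (i : Fin (finrank ℂ K)) : 𝓔 :=
      ⟨rankOne ℂ (v i) (v i), (isStarProjection_rankOne_self (hv i)).mem_Icc⟩
    refine ⟨Set.range f, ?_, fun B ⟨i, hB⟩ ↦ ⟨v i, hv i, hB ▸ rfl⟩, ?_⟩
    · have hf : (Set.range f).encard ≤ finrank ℂ K := by
        simpa using Set.encard_image_le f Set.univ
      exact hf.trans (by exact_mod_cast hn)
    · have hrange : Set.range f = {B : 𝓔 | ∃ i, (B : H →L[ℂ] H) = rankOne ℂ (v i) (v i)} := by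
        ext B
        exact ⟨fun ⟨i, hi⟩ ↦ ⟨i, hi ▸ rfl⟩, fun ⟨i, hi⟩ ↦ ⟨i, Subtype.ext hi.symm⟩⟩
      rw [hrange, show A = ⟨K.starProjection, _⟩ from Subtype.ext hAK]
      refine isLUB_setOf_rankOne v hv K (fun i ↦ (b i).2) ?_
      rw [show Set.range v = K.subtype '' Set.range b from Set.range_comp _ _, span_image,
        ← b.coe_toBasis, b.toBasis.span_eq, map_subtype_top]
      exact le_topologicalClosure K

end Hilbert

theorem order_bijection_preserves_projections_and_rank
    {H : Type*} [NormedAddCommGroup H] [InnerProductSpace ℂ H] [CompleteSpace H]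
    (hdim : 2 ≤ Module.rank ℂ H)
    (phi : (H →L[ℂ] H) → (H →L[ℂ] H))
    (hbij : Set.BijOn phi {A : H →L[ℂ] H | 0 ≤ A ∧ A ≤ 1} {A : H →L[ℂ] H | 0 ≤ A ∧ A ≤ 1})
    (horder : ∀ A ∈ {A : H →L[ℂ] H | 0 ≤ A ∧ A ≤ 1},
      ∀ B ∈ {A : H →L[ℂ] H | 0 ≤ A ∧ A ≤ 1}, (A ≤ B ↔ phi A ≤ phi B)) :
    (∀ A ∈ {A : H →L[ℂ] H | 0 ≤ A ∧ A ≤ 1},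
      ((A * A = A ∧ IsSelfAdjoint A) ↔ (phi A * phi A = phi A ∧ IsSelfAdjoint (phi A)))) ∧
    (∀ A ∈ {A : H →L[ℂ] H | 0 ≤ A ∧ A ≤ 1}, A * A = A → IsSelfAdjoint A →
      FiniteDimensional ℂ (LinearMap.range (A : H →ₗ[ℂ] H)) →
      Module.finrank ℂ (LinearMap.range (phi A : H →ₗ[ℂ] H)) = Module.finrank ℂ (LinearMap.range (A : H →ₗ[ℂ] H))) := by
  have : Nontrivial H := rank_pos_iff_nontrivial.1 (lt_of_lt_of_le two_pos hdim)
  let e : Set.Icc (0 : H →L[ℂ] H) 1 ≃o Set.Icc (0 : H →L[ℂ] H) 1 := hbij.orderIso phi horder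
  have he (k : ℕ∞) (A : Set.Icc (0 : H →L[ℂ] H) 1) :
      IsLUBOfAtMost IsMaxChainIic k (e A) ↔ IsLUBOfAtMost IsMaxChainIic k A :=
    e.isLUBOfAtMost_isMaxChainIic_apply_iff
  refine ⟨fun A hA ↦ ?_, fun A hA hidem hsa hfin ↦ ?_⟩
  · have h := (isLUBOfAtMost_top_iff_isStarProjection ⟨A, hA⟩).symm.trans <|
      (he ⊤ ⟨A, hA⟩).symm.trans (isLUBOfAtMost_top_iff_isStarProjection (e ⟨A, hA⟩))
    simp only [isStarProjection_iff, IsIdempotentElem] at h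
    exact h
  · obtain ⟨hP, hfin', hle⟩ := (isLUBOfAtMost_iff_finrank_le (e ⟨A, hA⟩) _).1 <| (he _ _).2 <|
      (isLUBOfAtMost_iff_finrank_le ⟨A, hA⟩ _).2 ⟨⟨hidem, hsa⟩, hfin, le_rfl⟩
    have hge := (isLUBOfAtMost_iff_finrank_le ⟨A, hA⟩ _).1 <| (he _ _).1 <|
      (isLUBOfAtMost_iff_finrank_le (e ⟨A, hA⟩) _).2 ⟨hP, hfin', le_rfl⟩
    exact le_antisymm hle hge.2.2
end

section
/- Let H be a complex Hilbert space with dim H ≥ 2 and φ : E(H) → E(H) a bijection preserving the order in both directions. Then for every rank-one projection P there exists a strictly increasing bijection f_P : [0,1] → [0,1] such that φ(tP) = f_P(t)·φ(P) for all t ∈ [0,1], and moreover φ⁻¹(t·φ(P)) = f_P⁻¹(t)·P for all t ∈ [0,1]. -/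
/-!
Effects below a rank-one projection `P` are exactly the multiples `t • P`, `t ∈ [0, 1]`, so the
order interval `[0, P]` is a chain. An order automorphism of the effect algebra fixes `0`, hence
maps `[0, P]` onto `[0, φ P]`, which is therefore a chain too. In a chain `[0, Q]` every `B` is a
multiple of `Q`: the closed sets `{t | t • Q ≤ B}` and `{t | B ≤ t • Q}` cover the connected
interval `[0, 1]`, so they meet. Transporting the parametrisation `t ↦ t • P` through `φ` then
gives the strictly increasing bijection `f`.
-/

open Set

section OrderedModule

variable {E : Type*} [AddCommGroup E] [PartialOrder E] [Module ℝ E]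

theorem smul_mem_Icc_zero [SMulPosMono ℝ E] {Q : E} (hQ : 0 ≤ Q) {t : ℝ}
    (ht : t ∈ Icc (0 : ℝ) 1) : t • Q ∈ Icc 0 Q := by
  have hmono := monotone_smul_right_of_nonneg (α := ℝ) hQ
  exact ⟨by simpa using hmono ht.1, by simpa using hmono ht.2⟩

theorem smul_mem_Icc_zero_iff [SMulPosStrictMono ℝ E] {Q : E} (hQ : 0 < Q) {t : ℝ} :
    t • Q ∈ Icc 0 Q ↔ t ∈ Icc (0 : ℝ) 1 := by
  refine ⟨fun h => ⟨?_, ?_⟩, smul_mem_Icc_zero hQ.le⟩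
  · exact (smul_le_smul_iff_of_pos_right hQ).mp (by simpa using h.1)
  · exact (smul_le_smul_iff_of_pos_right hQ).mp (by simpa using h.2)

theorem isChain_Icc_zero_of_subset_smul_image [SMulPosMono ℝ E] {Q : E} (hQ : 0 ≤ Q)
    (h : Icc 0 Q ⊆ (· • Q) '' Icc (0 : ℝ) 1) : IsChain (· ≤ ·) (Icc 0 Q) :=
  ((monotone_smul_right_of_nonneg hQ).isChain_image (isChain_of_trichotomous _)).mono h

theorem Icc_zero_subset_smul_image_of_isChain [SMulPosMono ℝ E] [TopologicalSpace E]
    [OrderClosedTopology E] [ContinuousSMul ℝ E] {Q : E} (hQ : IsChain (· ≤ ·) (Icc 0 Q)) :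
    Icc 0 Q ⊆ (· • Q) '' Icc (0 : ℝ) 1 := by
  intro B hB
  have hQ0 : 0 ≤ Q := hB.1.trans hB.2
  have hcont : Continuous fun t : ℝ => t • Q := continuous_id.smul continuous_const
  obtain ⟨t, ht, hle, hge⟩ := isPreconnected_closed_iff.mp isPreconnected_Icc
    {t | t • Q ≤ B} {t | B ≤ t • Q} (isClosed_le hcont continuous_const)
    (isClosed_le continuous_const hcont)
    (fun t ht => hQ.total (smul_mem_Icc_zero hQ0 ht) hB)
    ⟨0, left_mem_Icc.mpr zero_le_one, by simpa using hB.1⟩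
    ⟨1, right_mem_Icc.mpr zero_le_one, by simpa using hB.2⟩
  exact ⟨t, ht, le_antisymm hle hge⟩

end OrderedModule

structure IsOrderIsoOn {α : Type*} [LE α] (φ ψ : α → α) (s : Set α) : Prop where
  mapsTo : MapsTo φ s s
  mapsTo_symm : MapsTo ψ s s
  invOn : InvOn ψ φ s s
  le_iff_le : ∀ ⦃a⦄, a ∈ s → ∀ ⦃b⦄, b ∈ s → (φ a ≤ φ b ↔ a ≤ b)

namespace IsOrderIsoOn

section PartialOrder

variable {α : Type*} [PartialOrder α] {φ ψ : α → α} {s : Set α}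

theorem symm_le_iff_le (h : IsOrderIsoOn φ ψ s) {a b : α} (ha : a ∈ s) (hb : b ∈ s) :
    ψ a ≤ ψ b ↔ a ≤ b := by
  rw [← h.le_iff_le (h.mapsTo_symm ha) (h.mapsTo_symm hb), h.invOn.2 ha, h.invOn.2 hb]

variable [Zero α] [One α]

theorem map_zero (h : IsOrderIsoOn φ ψ (Icc 0 1)) (h01 : (0 : α) ≤ 1) : φ 0 = 0 := by
  have h0 : (0 : α) ∈ Icc 0 1 := left_mem_Icc.mpr h01
  refine le_antisymm ?_ (h.mapsTo h0).1
  calc φ 0 ≤ φ (ψ 0) := (h.le_iff_le h0 (h.mapsTo_symm h0)).mpr (h.mapsTo_symm h0).1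
    _ = 0 := h.invOn.2 h0

theorem mapsTo_Icc_zero (h : IsOrderIsoOn φ ψ (Icc 0 1)) {P : α} (hP : P ∈ Icc 0 1) :
    MapsTo φ (Icc 0 P) (Icc 0 (φ P)) := fun B hB => by
  have hB' : B ∈ Icc 0 1 := Icc_subset_Icc_right hP.2 hB
  rw [← h.map_zero (hP.1.trans hP.2)]
  exact ⟨(h.le_iff_le (left_mem_Icc.mpr (hP.1.trans hP.2)) hB').mpr hB.1,
    (h.le_iff_le hB' hP).mpr hB.2⟩

theorem mapsTo_symm_Icc_zero (h : IsOrderIsoOn φ ψ (Icc 0 1)) {P : α} (hP : P ∈ Icc 0 1) :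
    MapsTo ψ (Icc 0 (φ P)) (Icc 0 P) := fun B hB => by
  have hB' : B ∈ Icc 0 1 := Icc_subset_Icc_right (h.mapsTo hP).2 hB
  refine ⟨(h.mapsTo_symm hB').1, ?_⟩
  rw [← h.invOn.1 hP]
  exact (h.symm_le_iff_le hB' (h.mapsTo hP)).mpr hB.2

theorem isChain_Icc_zero_map (h : IsOrderIsoOn φ ψ (Icc 0 1)) {P : α} (hP : P ∈ Icc 0 1)
    (hc : IsChain (· ≤ ·) (Icc 0 P)) : IsChain (· ≤ ·) (Icc 0 (φ P)) := by
  intro B hB B' hB' _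
  have hmem : Icc 0 (φ P) ⊆ Icc 0 1 := Icc_subset_Icc_right (h.mapsTo hP).2
  exact (hc.total (h.mapsTo_symm_Icc_zero hP hB) (h.mapsTo_symm_Icc_zero hP hB')).imp
    (h.symm_le_iff_le (hmem hB) (hmem hB')).mp (h.symm_le_iff_le (hmem hB') (hmem hB)).mp

end PartialOrder

variable {E : Type*} [AddCommGroup E] [PartialOrder E] [Module ℝ E] [One E]
  [SMulPosStrictMono ℝ E] [TopologicalSpace E] [OrderClosedTopology E] [ContinuousSMul ℝ E]
  {φ ψ : E → E}

theorem Icc_zero_subset_smul_image_map (h : IsOrderIsoOn φ ψ (Icc 0 1)) {P : E}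
    (hP : P ∈ Icc 0 1) (hseg : Icc 0 P ⊆ (· • P) '' Icc (0 : ℝ) 1) :
    Icc 0 (φ P) ⊆ (· • φ P) '' Icc (0 : ℝ) 1 :=
  Icc_zero_subset_smul_image_of_isChain
    (h.isChain_Icc_zero_map hP (isChain_Icc_zero_of_subset_smul_image hP.1 hseg))

theorem exists_map_smul_eq_smul (h : IsOrderIsoOn φ ψ (Icc 0 1)) {P : E} (hP : P ∈ Icc 0 1)
    (hP0 : P ≠ 0) (hseg : Icc 0 P ⊆ (· • P) '' Icc (0 : ℝ) 1) :
    ∃ f : ℝ → ℝ, StrictMonoOn f (Icc 0 1) ∧ BijOn f (Icc 0 1) (Icc 0 1) ∧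
      (∀ t ∈ Icc (0 : ℝ) 1, φ (t • P) = f t • φ P) ∧
      (∀ t ∈ Icc (0 : ℝ) 1, ∀ s ∈ Icc (0 : ℝ) 1, f s = t →
        ψ (t • φ P) = s • P) := by
  have h01 : (0 : E) ≤ 1 := hP.1.trans hP.2
  have hQ0 : φ P ≠ 0 := fun hQ => hP0 <|
    h.invOn.1.injOn hP (left_mem_Icc.mpr h01) (hQ.trans (h.map_zero h01).symm)
  have hPpos : 0 < P := hP.1.lt_of_ne' hP0
  have hQpos : 0 < φ P := (h.mapsTo hP).1.lt_of_ne' hQ0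
  have hsmulP : ∀ t ∈ Icc (0 : ℝ) 1, t • P ∈ Icc 0 1 := fun t ht =>
    Icc_subset_Icc_right hP.2 (smul_mem_Icc_zero hP.1 ht)
  choose! f hf hfP using fun t (ht : t ∈ Icc (0 : ℝ) 1) =>
    h.Icc_zero_subset_smul_image_map hP hseg (h.mapsTo_Icc_zero hP (smul_mem_Icc_zero hP.1 ht))
  beta_reduce at hfP
  have hle : ∀ a ∈ Icc (0 : ℝ) 1, ∀ b ∈ Icc (0 : ℝ) 1, f a ≤ f b ↔ a ≤ b := by
    intro a ha b hb
    rw [← smul_le_smul_iff_of_pos_right hQpos, hfP a ha, hfP b hb,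
      h.le_iff_le (hsmulP a ha) (hsmulP b hb), smul_le_smul_iff_of_pos_right hPpos]
  have hmono : StrictMonoOn f (Icc 0 1) := fun a ha b hb =>
    (lt_iff_lt_of_le_iff_le' (hle b hb a ha) (hle a ha b hb)).mpr
  refine ⟨f, hmono, ⟨hf, hmono.injOn, fun s hs => ?_⟩, fun t ht => (hfP t ht).symm,
    fun t _ s hs hst => ?_⟩
  · have hsQ := smul_mem_Icc_zero hQpos.le hs
    obtain ⟨t, ht, hPt⟩ := hseg (h.mapsTo_symm_Icc_zero hP hsQ)
    refine ⟨t, ht, smul_left_injective ℝ hQ0 ?_⟩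
    simp only [hfP t ht, hPt, h.invOn.2 (Icc_subset_Icc_right (h.mapsTo hP).2 hsQ)]
  · rw [← hst, hfP s hs, h.invOn.1 (hsmulP s hs)]

end IsOrderIsoOn

theorem ContinuousLinearMap.ne_zero_of_finrank_range_eq_one {K V : Type*} [Semiring K]
    [Nontrivial K] [TopologicalSpace V] [AddCommMonoid V] [Module K V] {P : V →L[K] V}
    (hP : Module.finrank K (LinearMap.range (P : V →ₗ[K] V)) = 1) : P ≠ 0 := by
  rintro rfl
  rw [ContinuousLinearMap.toLinearMap_zero, LinearMap.range_zero, finrank_bot] at hP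
  exact zero_ne_one hP

theorem ContinuousLinearMap.exists_mul_mul_eq_smul_of_finrank_range_eq_one {K V : Type*}
    [Field K] [TopologicalSpace V] [AddCommGroup V] [Module K V] [ContinuousConstSMul K V]
    {P : V →L[K] V} (hP : Module.finrank K (LinearMap.range (P : V →ₗ[K] V)) = 1)
    (T : V →L[K] V) :
    ∃ c : K, P * T * P = c • P := by
  obtain ⟨w, -, hspan⟩ := finrank_eq_one_iff'.mp hP
  have hcoord (x : V) : ∃ a : K, P x = a • (w : V) := by
    obtain ⟨a, ha⟩ := hspan ⟨P x, LinearMap.mem_range_self (P : V →ₗ[K] V) x⟩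
    exact ⟨a, (congrArg Subtype.val ha).symm⟩
  obtain ⟨c, hc⟩ := hcoord (T w)
  refine ⟨c, ContinuousLinearMap.ext fun x => ?_⟩
  obtain ⟨a, ha⟩ := hcoord x
  simp only [mul_apply_eq_comp, smul_apply, ha, map_smul, hc, smul_comm a c]

section Operators

variable {H : Type*} [NormedAddCommGroup H] [InnerProductSpace ℂ H] [CompleteSpace H]

instance : SMulPosStrictMono ℝ (H →L[ℂ] H) := SMulPosMono.toSMulPosStrictMono

theorem IsStarProjection.Icc_zero_subset_smul_image_of_finrank_range_eq_one
    {P : H →L[ℂ] H} (hP : IsStarProjection P)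
    (hrk : Module.finrank ℂ (LinearMap.range (P : H →ₗ[ℂ] H)) = 1) :
    Icc 0 P ⊆ (· • P) '' Icc (0 : ℝ) 1 := by
  have hP0 := ContinuousLinearMap.ne_zero_of_finrank_range_eq_one hrk
  intro B hB
  obtain ⟨c, hc⟩ := P.exists_mul_mul_eq_smul_of_finrank_range_eq_one hrk B
  have hBc : B = c • P := (hP.conjugate_of_nonneg_of_le hB.1 hB.2).symm.trans hc
  have hc_real : (c.re : ℂ) = c := by
    have hstar := (IsSelfAdjoint.of_nonneg hB.1).star_eq
    rw [hBc, star_smul, hP.isSelfAdjoint.star_eq] at hstar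
    exact Complex.conj_eq_iff_re.mp (smul_left_injective ℂ hP0 hstar)
  have hBre : B = c.re • P := by rw [hBc, ← Complex.coe_smul, hc_real]
  rw [hBre, smul_mem_Icc_zero_iff (hP.nonneg.lt_of_ne' hP0)] at hB
  exact ⟨c.re, hB, hBre.symm⟩

end Operators

theorem order_bijection_scalar_action_on_weak_atoms_general
    {H : Type*} [NormedAddCommGroup H] [InnerProductSpace ℂ H] [CompleteSpace H]
    (phi psi : (H →L[ℂ] H) → (H →L[ℂ] H))
    (hbij : Set.BijOn phi {A : H →L[ℂ] H | 0 ≤ A ∧ A ≤ 1} {A : H →L[ℂ] H | 0 ≤ A ∧ A ≤ 1})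
    (hinv : ∀ A ∈ {A : H →L[ℂ] H | 0 ≤ A ∧ A ≤ 1}, psi (phi A) = A ∧ phi (psi A) = A)
    (hpsi_maps : Set.MapsTo psi {A : H →L[ℂ] H | 0 ≤ A ∧ A ≤ 1}
      {A : H →L[ℂ] H | 0 ≤ A ∧ A ≤ 1})
    (horder : ∀ A ∈ {A : H →L[ℂ] H | 0 ≤ A ∧ A ≤ 1},
      ∀ B ∈ {A : H →L[ℂ] H | 0 ≤ A ∧ A ≤ 1}, (A ≤ B ↔ phi A ≤ phi B)) :
    ∀ P : H →L[ℂ] H, P * P = P → IsSelfAdjoint P →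
      Module.finrank ℂ (LinearMap.range (P : H →ₗ[ℂ] H)) = 1 →
      ∃ f : ℝ → ℝ, StrictMonoOn f (Set.Icc (0:ℝ) 1) ∧
        Set.BijOn f (Set.Icc (0:ℝ) 1) (Set.Icc (0:ℝ) 1) ∧
        (∀ t ∈ Set.Icc (0:ℝ) 1, phi (t • P) = f t • phi P) ∧
        (∀ t ∈ Set.Icc (0:ℝ) 1, ∀ s ∈ Set.Icc (0:ℝ) 1, f s = t →
          psi (t • phi P) = s • P) := by
  intro P hPP hPsa hrk
  have hP : IsStarProjection P := ⟨hPP, hPsa⟩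
  have hiso : IsOrderIsoOn phi psi (Icc 0 1) :=
    ⟨hbij.mapsTo, hpsi_maps, ⟨fun A hA => (hinv A hA).1, fun A hA => (hinv A hA).2⟩,
      fun A hA B hB => (horder A hA B hB).symm⟩
  exact hiso.exists_map_smul_eq_smul hP.mem_Icc
    (ContinuousLinearMap.ne_zero_of_finrank_range_eq_one hrk)
    (hP.Icc_zero_subset_smul_image_of_finrank_range_eq_one hrk)

theorem order_bijection_scalar_action_on_weak_atoms
    {H : Type*} [NormedAddCommGroup H] [InnerProductSpace ℂ H] [CompleteSpace H]
    (hdim : 2 ≤ Module.rank ℂ H)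
    (phi psi : (H →L[ℂ] H) → (H →L[ℂ] H))
    (hbij : Set.BijOn phi {A : H →L[ℂ] H | 0 ≤ A ∧ A ≤ 1} {A : H →L[ℂ] H | 0 ≤ A ∧ A ≤ 1})
    (hinv : ∀ A ∈ {A : H →L[ℂ] H | 0 ≤ A ∧ A ≤ 1}, psi (phi A) = A ∧ phi (psi A) = A)
    (hpsi_maps : Set.MapsTo psi {A : H →L[ℂ] H | 0 ≤ A ∧ A ≤ 1}
      {A : H →L[ℂ] H | 0 ≤ A ∧ A ≤ 1})
    (horder : ∀ A ∈ {A : H →L[ℂ] H | 0 ≤ A ∧ A ≤ 1},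
      ∀ B ∈ {A : H →L[ℂ] H | 0 ≤ A ∧ A ≤ 1}, (A ≤ B ↔ phi A ≤ phi B)) :
    ∀ P : H →L[ℂ] H, P * P = P → IsSelfAdjoint P →
      Module.finrank ℂ (LinearMap.range (P : H →ₗ[ℂ] H)) = 1 →
      ∃ f : ℝ → ℝ, StrictMonoOn f (Set.Icc (0:ℝ) 1) ∧
        Set.BijOn f (Set.Icc (0:ℝ) 1) (Set.Icc (0:ℝ) 1) ∧
        (∀ t ∈ Set.Icc (0:ℝ) 1, phi (t • P) = f t • phi P) ∧
        (∀ t ∈ Set.Icc (0:ℝ) 1, ∀ s ∈ Set.Icc (0:ℝ) 1, f s = t →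
          psi (t • phi P) = s • P) :=
  order_bijection_scalar_action_on_weak_atoms_general phi psi hbij hinv hpsi_maps horder
end
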